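/- arXiv:2208.12127 — 2 statements merged into one kernel-verified Lean document; each statement's English description precedes it below -/
import Mathlib

section
/- Under the penalized QIF setup, let θ₀ ∈ Θ and assume E‖g₁(θ₀)‖ < ∞, E[g₁(θ₀)] = 0, C̄_N(θ₀) → C₀ almost surely with C₀ invertible, and λ_N → 0. Suppose for every θ ∈ Θ the matrix C̄_N(θ) is positive semidefinite (which holds by construction), so that N⁻¹Q_N(θ) ≥ 0 and θᵀDθ ≥ 0. Then, since θ̂_N minimizes the penalized objective, the inequality N⁻¹Q_N(θ̂_N) + λ_N θ̂_Nᵀ D θ̂_N ≤ N⁻¹Q_N(θ₀) + λ_N θ₀ᵀ D θ₀ implies N⁻¹ Q_N(θ̂_N) = ḡ_N(θ̂_N)ᵀ C̄_N(θ̂_N)⁻¹ ḡ_N(θ̂_N) → 0 almost surely as N → ∞. -/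
open MeasureTheory ProbabilityTheory Filter Matrix Topology

/-- Sample mean `ḡ_N(θ)(ω) = N⁻¹ ∑_{i<N} g_i(θ)(ω)`. -/
noncomputable def gbar {k r : ℕ} {Ω : Type*} (g : ℕ → (Fin k → ℝ) → Ω → Fin r → ℝ)
    (N : ℕ) (θ : Fin k → ℝ) (ω : Ω) : Fin r → ℝ :=
  (N : ℝ)⁻¹ • ∑ i ∈ Finset.range N, g i θ ω

/-- Sample second-moment matrix `C̄_N(θ)(ω) = N⁻¹ ∑_{i<N} g_i(θ)(ω) g_i(θ)(ω)ᵀ`. -/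
noncomputable def Cbar {k r : ℕ} {Ω : Type*} (g : ℕ → (Fin k → ℝ) → Ω → Fin r → ℝ)
    (N : ℕ) (θ : Fin k → ℝ) (ω : Ω) : Matrix (Fin r) (Fin r) ℝ :=
  (N : ℝ)⁻¹ • ∑ i ∈ Finset.range N, Matrix.vecMulVec (g i θ ω) (g i θ ω)

/-- Quadratic inference function `Q_N(θ) = N ḡ_Nᵀ C̄_N⁻¹ ḡ_N`. -/
noncomputable def QN {k r : ℕ} {Ω : Type*} (g : ℕ → (Fin k → ℝ) → Ω → Fin r → ℝ)
    (N : ℕ) (θ : Fin k → ℝ) (ω : Ω) : ℝ :=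
  (N : ℝ) * (gbar g N θ ω ⬝ᵥ (Cbar g N θ ω)⁻¹.mulVec (gbar g N θ ω))

/-- Penalized QIF objective `N⁻¹ Q_N(θ) + λ_N θᵀ D θ`. -/
noncomputable def penObj {k r : ℕ} {Ω : Type*} (g : ℕ → (Fin k → ℝ) → Ω → Fin r → ℝ)
    (D : Matrix (Fin k) (Fin k) ℝ) (lam : ℕ → ℝ)
    (N : ℕ) (θ : Fin k → ℝ) (ω : Ω) : ℝ :=
  (N : ℝ)⁻¹ * QN g N θ ω + lam N * (θ ⬝ᵥ D.mulVec θ)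

/-! The strong law of large numbers gives `ḡ_N(θ₀) → 0` a.s., and with `C̄_N(θ₀) → C₀` invertible
the quadratic form `ḡ_N(θ₀)ᵀ C̄_N(θ₀)⁻¹ ḡ_N(θ₀)` tends to `0`, as does `λ_N θ₀ᵀ D θ₀`. By minimality
of `θ̂_N`, the nonnegative quantity `ḡ_N(θ̂_N)ᵀ C̄_N(θ̂_N)⁻¹ ḡ_N(θ̂_N)` is bounded by their sum,
because the penalty at `θ̂_N` is nonnegative. -/

section QuadraticForm

variable {n : Type*} [Fintype n] [DecidableEq n]

lemma Matrix.PosSemidef.dotProduct_inv_mulVec_nonneg {A : Matrix n n ℝ} (hA : A.PosSemidef)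
    (v : n → ℝ) : 0 ≤ v ⬝ᵥ A⁻¹ *ᵥ v := by
  simpa using hA.inv.dotProduct_mulVec_nonneg v

lemma tendsto_dotProduct_inv_mulVec_zero {ι : Type*} {l : Filter ι} {v : ι → n → ℝ}
    {M : ι → Matrix n n ℝ} {C : Matrix n n ℝ} (hC : IsUnit C.det)
    (hv : Tendsto v l (𝓝 0)) (hM : Tendsto M l (𝓝 C)) :
    Tendsto (fun i => v i ⬝ᵥ (M i)⁻¹ *ᵥ v i) l (𝓝 0) := by
  have hinv : Tendsto (fun i => (M i)⁻¹) l (𝓝 C⁻¹) :=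
    (continuousAt_matrix_inv C (NormedRing.inverse_continuousAt hC.unit)).tendsto.comp hM
  have hqf : Continuous fun p : (n → ℝ) × Matrix n n ℝ => p.1 ⬝ᵥ p.2 *ᵥ p.1 :=
    continuous_fst.dotProduct (continuous_snd.matrix_mulVec continuous_fst)
  simpa [Function.comp_def] using (hqf.tendsto (0, C⁻¹)).comp (hv.prodMk_nhds hinv)

end QuadraticForm

lemma tendsto_zero_of_add_penalty_le {ι : Type*} {l : Filter ι} {f b lam p : ι → ℝ} {c : ℝ}
    (hf : ∀ i, 0 ≤ f i) (hlam_nonneg : ∀ i, 0 ≤ lam i) (hp : ∀ i, 0 ≤ p i)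
    (hle : ∀ᶠ i in l, f i + lam i * p i ≤ b i + lam i * c)
    (hb : Tendsto b l (𝓝 0)) (hlam : Tendsto lam l (𝓝 0)) :
    Tendsto f l (𝓝 0) := by
  have hbound : Tendsto (fun i => b i + lam i * c) l (𝓝 0) := by
    simpa using hb.add (hlam.mul_const c)
  refine tendsto_of_tendsto_of_tendsto_of_le_of_le' tendsto_const_nhds hbound
    (Eventually.of_forall hf) ?_
  filter_upwards [hle] with i hi
  nlinarith [mul_nonneg (hlam_nonneg i) (hp i)]

section QIF

variable {k r : ℕ} {Ω : Type*} (g : ℕ → (Fin k → ℝ) → Ω → Fin r → ℝ)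

lemma penObj_eq_of_ne_zero (D : Matrix (Fin k) (Fin k) ℝ) (lam : ℕ → ℝ) {N : ℕ} (hN : N ≠ 0)
    (θ : Fin k → ℝ) (ω : Ω) :
    penObj g D lam N θ ω =
      gbar g N θ ω ⬝ᵥ (Cbar g N θ ω)⁻¹ *ᵥ gbar g N θ ω + lam N * (θ ⬝ᵥ D *ᵥ θ) := by
  rw [penObj, QN, inv_mul_cancel_left₀ (Nat.cast_ne_zero.mpr hN)]

lemma ae_tendsto_gbar_zero [MeasurableSpace Ω] (P : Measure Ω) (θ : Fin k → ℝ)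
    (hindep : iIndepFun (fun i ω => g i θ ω) P)
    (hident : ∀ i, IdentDistrib (g i θ) (g 0 θ) P P)
    (hint : Integrable (g 0 θ) P) (hmean : ∫ ω, g 0 θ ω ∂P = 0) :
    ∀ᵐ ω ∂P, Tendsto (fun N => gbar g N θ ω) atTop (𝓝 0) := by
  have hslln := strong_law_ae (fun i => g i θ) hint (fun i j hij => hindep.indepFun hij) hident
  simpa only [gbar, hmean] using hslln

end QIF

theorem stmt4_general {k r : ℕ} {Ω : Type*} [MeasurableSpace Ω]
    (P : Measure Ω)
    (Θ : Set (Fin k → ℝ))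
    (g : ℕ → (Fin k → ℝ) → Ω → Fin r → ℝ)
    (hindep : ∀ θ, iIndepFun (fun i ω => g i θ ω) P)
    (hident : ∀ θ i, IdentDistrib (g i θ) (g 0 θ) P P)
    (D : Matrix (Fin k) (Fin k) ℝ) (hD : D.PosSemidef)
    (lam : ℕ → ℝ) (hlamnn : ∀ N, 0 ≤ lam N)
    (θhat : ℕ → Ω → Fin k → ℝ)
    (hθhatmin : ∀ N ω, ∀ θ ∈ Θ, penObj g D lam N (θhat N ω) ω ≤ penObj g D lam N θ ω)
    (θ₀ : Fin k → ℝ) (hθ₀ : θ₀ ∈ Θ)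
    (hint : Integrable (g 0 θ₀) P)
    (hmean : (∫ ω, g 0 θ₀ ω ∂P) = 0)
    (C₀ : Matrix (Fin r) (Fin r) ℝ) (hC₀ : IsUnit C₀.det)
    (hCbar : ∀ᵐ ω ∂P, ∀ a b,
      Tendsto (fun N => Cbar g N θ₀ ω a b) atTop (𝓝 (C₀ a b)))
    (hlam : Tendsto lam atTop (𝓝 0))
    (hPSD : ∀ N θ ω, (Cbar g N θ ω).PosSemidef) :
    ∀ᵐ ω ∂P, Tendsto
      (fun N => gbar g N (θhat N ω) ω ⬝ᵥ
        (Cbar g N (θhat N ω) ω)⁻¹.mulVec (gbar g N (θhat N ω) ω))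
      atTop (𝓝 0) := by
  filter_upwards [ae_tendsto_gbar_zero g P θ₀ (hindep θ₀) (hident θ₀) hint hmean, hCbar]
    with ω hgbar hCbar_entries
  have hCbar_lim : Tendsto (fun N => Cbar g N θ₀ ω) atTop (𝓝 C₀) :=
    tendsto_pi_nhds.2 fun a => tendsto_pi_nhds.2 (hCbar_entries a)
  refine tendsto_zero_of_add_penalty_le (c := θ₀ ⬝ᵥ D *ᵥ θ₀)
    (fun N => (hPSD N _ ω).dotProduct_inv_mulVec_nonneg _) hlamnn
    (fun N => by simpa using hD.dotProduct_mulVec_nonneg (θhat N ω)) ?_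
    (tendsto_dotProduct_inv_mulVec_zero hC₀ hgbar hCbar_lim) hlam
  filter_upwards [eventually_ne_atTop 0] with N hN
  simpa only [penObj_eq_of_ne_zero g D lam hN] using hθhatmin N ω θ₀ hθ₀

/-- Under the penalized QIF setup with `E‖g₁(θ₀)‖ < ∞`, `E[g₁(θ₀)] = 0`,
`C̄_N(θ₀) → C₀` a.s. (C₀ invertible), `λ_N → 0`, and `C̄_N(θ)` positive semidefinite for all
θ, since `θ̂_N` minimizes the penalized objective, the basic inequality
`N⁻¹Q_N(θ̂_N) + λ_N θ̂ᵀDθ̂ ≤ N⁻¹Q_N(θ₀) + λ_N θ₀ᵀDθ₀` yields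
`N⁻¹ Q_N(θ̂_N) = ḡ_N(θ̂_N)ᵀ C̄_N(θ̂_N)⁻¹ ḡ_N(θ̂_N) → 0` almost surely. -/
theorem stmt4 {k r : ℕ} {Ω : Type*} [MeasurableSpace Ω]
    (P : Measure Ω) [IsProbabilityMeasure P]
    (Θ : Set (Fin k → ℝ)) (hΘ : IsCompact Θ)
    (g : ℕ → (Fin k → ℝ) → Ω → Fin r → ℝ)
    (hmeas : ∀ i, Measurable fun p : (Fin k → ℝ) × Ω => g i p.1 p.2)
    (hcont : ∀ i ω, Continuous fun θ => g i θ ω)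
    (hindep : ∀ θ, iIndepFun (fun i ω => g i θ ω) P)
    (hident : ∀ θ i, IdentDistrib (g i θ) (g 0 θ) P P)
    (D : Matrix (Fin k) (Fin k) ℝ) (hD : D.PosSemidef)
    (lam : ℕ → ℝ) (hlamnn : ∀ N, 0 ≤ lam N)
    (θhat : ℕ → Ω → Fin k → ℝ)
    (hθhatmeas : ∀ N, Measurable (θhat N))
    (hθhatmem : ∀ N ω, θhat N ω ∈ Θ)
    (hθhatmin : ∀ N ω, ∀ θ ∈ Θ, penObj g D lam N (θhat N ω) ω ≤ penObj g D lam N θ ω)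
    (θ₀ : Fin k → ℝ) (hθ₀ : θ₀ ∈ Θ)
    (hint : Integrable (g 0 θ₀) P)
    (hmean : (∫ ω, g 0 θ₀ ω ∂P) = 0)
    (C₀ : Matrix (Fin r) (Fin r) ℝ) (hC₀ : IsUnit C₀.det)
    (hCbar : ∀ᵐ ω ∂P, ∀ a b,
      Tendsto (fun N => Cbar g N θ₀ ω a b) atTop (𝓝 (C₀ a b)))
    (hlam : Tendsto lam atTop (𝓝 0))
    (hPSD : ∀ N θ ω, (Cbar g N θ ω).PosSemidef) :
    ∀ᵐ ω ∂P, Tendsto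
      (fun N => gbar g N (θhat N ω) ω ⬝ᵥ
        (Cbar g N (θhat N ω) ω)⁻¹.mulVec (gbar g N (θhat N ω) ω))
      atTop (𝓝 0) :=
  stmt4_general P Θ g hindep hident D hD lam hlamnn θhat hθhatmin θ₀ hθ₀ hint hmean C₀ hC₀ hCbar
    hlam hPSD
end

section
/- Under the penalized QIF setup, let θ₀ ∈ Θ with E‖g₁(θ₀)‖ < ∞ and E[g₁(θ₀)] = 0, let h(θ) = E[g₁(θ)] be continuous on Θ, and assume: (i) sup_{θ∈Θ} ‖ḡ_N(θ) − h(θ)‖ → 0 almost surely; (ii) C̄_N(θ₀) → C₀ and C̄_N(θ̂_N) → C₀ almost surely, where C₀ is a constant invertible r×r matrix; (iii) λ_N → 0. Then h(θ̂_N)ᵀ C₀⁻¹ h(θ̂_N) → 0 almost surely as N → ∞. -/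
/-!
Fix `ω` outside a null set. Uniform convergence gives `ḡ_N(θ₀) → h(θ₀) = 0` and
`ḡ_N(θ̂_N) - h(θ̂_N) → 0`, and continuity of matrix inversion at `C₀` gives
`C̄_N(θ₀)⁻¹, C̄_N(θ̂_N)⁻¹ → C₀⁻¹`. Comparing the penalized objective at `θ̂_N` with its value at
`θ₀` (the penalty is nonnegative) squeezes `ḡ_N(θ̂_N)ᵀ C̄_N(θ̂_N)⁻¹ ḡ_N(θ̂_N)` between `0` and a
quantity tending to `0`. Since `h(θ̂_N)` stays in the compact set `h(Θ)`, near which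
`(x, M) ↦ xᵀ M x` is uniformly continuous, the same limit holds for `h(θ̂_N)ᵀ C₀⁻¹ h(θ̂_N)`.
-/

open MeasureTheory ProbabilityTheory Filter Matrix Topology

theorem tendsto_of_tendsto_of_eventually_mem_isCompact {ι X Y Z : Type*} [TopologicalSpace X]
    [TopologicalSpace Y] [TopologicalSpace Z] {F : X × Y → Z} (hF : Continuous F)
    {K : Set Y} (hK : IsCompact K) {x₀ : X} {z : Z} (hF₀ : ∀ y ∈ K, F (x₀, y) = z)
    {l : Filter ι} {x : ι → X} {y : ι → Y} (hx : Tendsto x l (𝓝 x₀))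
    (hy : ∀ᶠ i in l, y i ∈ K) : Tendsto (fun i => F (x i, y i)) l (𝓝 z) := by
  have hxy : Tendsto (fun i => (x i, y i)) l (𝓝ˢ ({x₀} ×ˢ K)) := by
    rw [isCompact_singleton.nhdsSet_prod_eq hK, nhdsSet_singleton]
    exact hx.prodMk ((tendsto_principal.2 hy).mono_right principal_le_nhdsSet)
  have hFz : Set.MapsTo F ({x₀} ×ˢ K) {z} := by
    rintro ⟨_, y⟩ ⟨rfl, hy⟩
    exact hF₀ y hy
  rw [← nhdsSet_singleton]
  exact (hF.tendsto_nhdsSet hFz).comp hxy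

section QuadraticForm

variable {ι n : Type*} [Fintype n] {l : Filter ι}

theorem Filter.Tendsto.dotProduct_mulVec_self {u : ι → n → ℝ} {A : ι → Matrix n n ℝ}
    {x : n → ℝ} {M : Matrix n n ℝ} (hu : Tendsto u l (𝓝 x)) (hA : Tendsto A l (𝓝 M)) :
    Tendsto (fun i => u i ⬝ᵥ A i *ᵥ u i) l (𝓝 (x ⬝ᵥ M *ᵥ x)) :=
  ((by fun_prop : Continuous fun p : (n → ℝ) × Matrix n n ℝ => p.1 ⬝ᵥ p.2 *ᵥ p.1).tendsto
    (x, M)).comp (hu.prodMk_nhds hA)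

theorem Matrix.tendsto_inv [DecidableEq n] {A : ι → Matrix n n ℝ} {M : Matrix n n ℝ}
    (hA : Tendsto A l (𝓝 M)) (hM : IsUnit M.det) : Tendsto (fun i => (A i)⁻¹) l (𝓝 M⁻¹) :=
  (continuousAt_matrix_inv M (NormedRing.inverse_continuousAt hM.unit)).tendsto.comp hA

theorem tendsto_dotProduct_mulVec_self_of_tendsto_sub {K : Set (n → ℝ)} (hK : IsCompact K)
    {u y : ι → n → ℝ} {A : ι → Matrix n n ℝ} {M : Matrix n n ℝ} (hy : ∀ i, y i ∈ K)
    (huy : Tendsto (u - y) l (𝓝 0)) (hA : Tendsto A l (𝓝 M))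
    (hu : Tendsto (fun i => u i ⬝ᵥ A i *ᵥ u i) l (𝓝 0)) :
    Tendsto (fun i => y i ⬝ᵥ M *ᵥ y i) l (𝓝 0) := by
  have hdiff : Tendsto (fun i => u i ⬝ᵥ A i *ᵥ u i - y i ⬝ᵥ M *ᵥ y i) l (𝓝 0) := by
    have := tendsto_of_tendsto_of_eventually_mem_isCompact
      (F := fun p : ((n → ℝ) × Matrix n n ℝ) × (n → ℝ) =>
        (p.2 + p.1.1) ⬝ᵥ p.1.2 *ᵥ (p.2 + p.1.1) - p.2 ⬝ᵥ M *ᵥ p.2)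
      (by fun_prop) hK (x₀ := (0, M)) (z := 0) (by simp) (huy.prodMk_nhds hA) (.of_forall hy)
    simpa using this
  simpa using hu.sub hdiff

end QuadraticForm

section QIF

variable {k r : ℕ} {Ω : Type*} {g : ℕ → (Fin k → ℝ) → Ω → Fin r → ℝ}

theorem continuous_gbar {ω : Ω} (hg : ∀ i, Continuous fun θ => g i θ ω) (N : ℕ) :
    Continuous fun θ => gbar g N θ ω := by
  unfold gbar
  fun_prop

theorem Cbar_posSemidef (N : ℕ) (θ : Fin k → ℝ) (ω : Ω) : (Cbar g N θ ω).PosSemidef :=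
  (posSemidef_sum _ fun i _ => by
    simpa using posSemidef_vecMulVec_self_star (g i θ ω)).smul (by positivity)

theorem tendsto_gbar_sub_of_tendsto_iSup {Θ : Set (Fin k → ℝ)} (hΘ : IsCompact Θ) {ω : Ω}
    (hg : ∀ i, Continuous fun θ => g i θ ω) {h : (Fin k → ℝ) → Fin r → ℝ}
    (hh : ContinuousOn h Θ)
    (hsup : Tendsto (fun N => ⨆ θ : Θ, ‖gbar g N (θ : Fin k → ℝ) ω - h θ‖) atTop (𝓝 0))
    {θ' : ℕ → Fin k → ℝ} (hθ' : ∀ N, θ' N ∈ Θ) :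
    Tendsto (fun N => gbar g N (θ' N) ω - h (θ' N)) atTop (𝓝 0) := by
  refine squeeze_zero_norm (fun N => le_ciSup (f := fun θ : Θ => ‖gbar g N θ ω - h θ‖) ?_
    ⟨θ' N, hθ' N⟩) hsup
  simpa only [Set.image_eq_range] using
    hΘ.bddAbove_image (f := fun θ => ‖gbar g N θ ω - h θ‖)
      ((continuous_gbar hg N).continuousOn.sub hh).norm

theorem dotProduct_mulVec_le_of_penObj_le {D : Matrix (Fin k) (Fin k) ℝ} (hD : D.PosSemidef)
    {lam : ℕ → ℝ} {N : ℕ} (hlam : 0 ≤ lam N) (hN : N ≠ 0) {θ θ' : Fin k → ℝ} {ω : Ω}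
    (hle : penObj g D lam N θ ω ≤ penObj g D lam N θ' ω) :
    gbar g N θ ω ⬝ᵥ (Cbar g N θ ω)⁻¹ *ᵥ gbar g N θ ω
      ≤ gbar g N θ' ω ⬝ᵥ (Cbar g N θ' ω)⁻¹ *ᵥ gbar g N θ' ω + lam N * (θ' ⬝ᵥ D *ᵥ θ') := by
  have hpen : 0 ≤ lam N * (θ ⬝ᵥ D *ᵥ θ) :=
    mul_nonneg hlam (by simpa using hD.dotProduct_mulVec_nonneg θ)
  simp only [penObj, QN, inv_mul_cancel_left₀ ((Nat.cast_ne_zero (R := ℝ)).2 hN)] at hle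
  linarith

end QIF

theorem stmt6_general {k r : ℕ} {Ω : Type*} [MeasurableSpace Ω]
    (P : Measure Ω)
    (Θ : Set (Fin k → ℝ)) (hΘ : IsCompact Θ)
    (g : ℕ → (Fin k → ℝ) → Ω → Fin r → ℝ)
    (hcont : ∀ i ω, Continuous fun θ => g i θ ω)
    (D : Matrix (Fin k) (Fin k) ℝ) (hD : D.PosSemidef)
    (lam : ℕ → ℝ) (hlamnn : ∀ N, 0 ≤ lam N)
    (θhat : ℕ → Ω → Fin k → ℝ)
    (hθhatmem : ∀ N ω, θhat N ω ∈ Θ)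
    (hθhatmin : ∀ N ω, ∀ θ ∈ Θ, penObj g D lam N (θhat N ω) ω ≤ penObj g D lam N θ ω)
    (θ₀ : Fin k → ℝ) (hθ₀ : θ₀ ∈ Θ)
    (hmean : (∫ ω, g 0 θ₀ ω ∂P) = 0)
    (h : (Fin k → ℝ) → Fin r → ℝ)
    (hh : ∀ θ, h θ = ∫ ω, g 0 θ ω ∂P)
    (hhcont : ContinuousOn h Θ)
    -- (i)
    (hsup : ∀ᵐ ω ∂P,
      Tendsto (fun N => ⨆ θ : Θ, ‖gbar g N (θ : Fin k → ℝ) ω - h (θ : Fin k → ℝ)‖)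
        atTop (𝓝 0))
    -- (ii)
    (C₀ : Matrix (Fin r) (Fin r) ℝ) (hC₀ : IsUnit C₀.det)
    (hCbar0 : ∀ᵐ ω ∂P, ∀ a b,
      Tendsto (fun N => Cbar g N θ₀ ω a b) atTop (𝓝 (C₀ a b)))
    (hCbarhat : ∀ᵐ ω ∂P, ∀ a b,
      Tendsto (fun N => Cbar g N (θhat N ω) ω a b) atTop (𝓝 (C₀ a b)))
    -- (iii)
    (hlam : Tendsto lam atTop (𝓝 0)) :
    ∀ᵐ ω ∂P, Tendsto
      (fun N => h (θhat N ω) ⬝ᵥ C₀⁻¹.mulVec (h (θhat N ω)))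
      atTop (𝓝 0) := by
  filter_upwards [hsup, hCbar0, hCbarhat] with ω hsupω hC0ω hChatω
  have hdev {θ' : ℕ → Fin k → ℝ} (hθ' : ∀ N, θ' N ∈ Θ) :=
    tendsto_gbar_sub_of_tendsto_iSup hΘ (hcont · ω) hhcont hsupω hθ'
  have hgbar₀ : Tendsto (fun N => gbar g N θ₀ ω) atTop (𝓝 0) := by
    simpa [hh, hmean] using hdev fun _ => hθ₀
  have hinv₀ := Matrix.tendsto_inv (tendsto_pi_nhds.2 fun a => tendsto_pi_nhds.2 (hC0ω a)) hC₀
  have hinv := Matrix.tendsto_inv (tendsto_pi_nhds.2 fun a => tendsto_pi_nhds.2 (hChatω a)) hC₀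
  have hbound : Tendsto (fun N => gbar g N θ₀ ω ⬝ᵥ (Cbar g N θ₀ ω)⁻¹ *ᵥ gbar g N θ₀ ω
      + lam N * (θ₀ ⬝ᵥ D *ᵥ θ₀)) atTop (𝓝 0) := by
    simpa using (hgbar₀.dotProduct_mulVec_self hinv₀).add (hlam.mul_const _)
  have hQ : Tendsto (fun N => gbar g N (θhat N ω) ω ⬝ᵥ (Cbar g N (θhat N ω) ω)⁻¹ *ᵥ
      gbar g N (θhat N ω) ω) atTop (𝓝 0) :=
    tendsto_of_tendsto_of_tendsto_of_le_of_le' tendsto_const_nhds hbound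
      (.of_forall fun N => by simpa using (Cbar_posSemidef N _ ω).inv.dotProduct_mulVec_nonneg _)
      ((eventually_ne_atTop 0).mono fun N hN =>
        dotProduct_mulVec_le_of_penObj_le hD (hlamnn N) hN (hθhatmin N ω θ₀ hθ₀))
  exact tendsto_dotProduct_mulVec_self_of_tendsto_sub (hΘ.image_of_continuousOn hhcont)
    (fun N => Set.mem_image_of_mem h (hθhatmem N ω)) (hdev (hθhatmem · ω)) hinv hQ

/-- Under the penalized QIF setup, with θ₀ ∈ Θ, `E‖g₁(θ₀)‖ < ∞`,
`E[g₁(θ₀)] = 0`, `h(θ) = E[g₁(θ)]` continuous on Θ, uniform a.s. convergence of ḡ_N to h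
over Θ, `C̄_N(θ₀) → C₀` and `C̄_N(θ̂_N) → C₀` a.s. with C₀ constant invertible, and
`λ_N → 0`, it holds that `h(θ̂_N)ᵀ C₀⁻¹ h(θ̂_N) → 0` almost surely. -/
theorem stmt6 {k r : ℕ} {Ω : Type*} [MeasurableSpace Ω]
    (P : Measure Ω) [IsProbabilityMeasure P]
    (Θ : Set (Fin k → ℝ)) (hΘ : IsCompact Θ)
    (g : ℕ → (Fin k → ℝ) → Ω → Fin r → ℝ)
    (hmeas : ∀ i, Measurable fun p : (Fin k → ℝ) × Ω => g i p.1 p.2)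
    (hcont : ∀ i ω, Continuous fun θ => g i θ ω)
    (hindep : ∀ θ, iIndepFun (fun i ω => g i θ ω) P)
    (hident : ∀ θ i, IdentDistrib (g i θ) (g 0 θ) P P)
    (D : Matrix (Fin k) (Fin k) ℝ) (hD : D.PosSemidef)
    (lam : ℕ → ℝ) (hlamnn : ∀ N, 0 ≤ lam N)
    (θhat : ℕ → Ω → Fin k → ℝ)
    (hθhatmeas : ∀ N, Measurable (θhat N))
    (hθhatmem : ∀ N ω, θhat N ω ∈ Θ)
    (hθhatmin : ∀ N ω, ∀ θ ∈ Θ, penObj g D lam N (θhat N ω) ω ≤ penObj g D lam N θ ω)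
    (θ₀ : Fin k → ℝ) (hθ₀ : θ₀ ∈ Θ)
    (hint : Integrable (g 0 θ₀) P)
    (hmean : (∫ ω, g 0 θ₀ ω ∂P) = 0)
    (h : (Fin k → ℝ) → Fin r → ℝ)
    (hh : ∀ θ, h θ = ∫ ω, g 0 θ ω ∂P)
    (hhcont : ContinuousOn h Θ)
    -- (i)
    (hsup : ∀ᵐ ω ∂P,
      Tendsto (fun N => ⨆ θ : Θ, ‖gbar g N (θ : Fin k → ℝ) ω - h (θ : Fin k → ℝ)‖)
        atTop (𝓝 0))
    -- (ii)
    (C₀ : Matrix (Fin r) (Fin r) ℝ) (hC₀ : IsUnit C₀.det)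
    (hCbar0 : ∀ᵐ ω ∂P, ∀ a b,
      Tendsto (fun N => Cbar g N θ₀ ω a b) atTop (𝓝 (C₀ a b)))
    (hCbarhat : ∀ᵐ ω ∂P, ∀ a b,
      Tendsto (fun N => Cbar g N (θhat N ω) ω a b) atTop (𝓝 (C₀ a b)))
    -- (iii)
    (hlam : Tendsto lam atTop (𝓝 0)) :
    ∀ᵐ ω ∂P, Tendsto
      (fun N => h (θhat N ω) ⬝ᵥ C₀⁻¹.mulVec (h (θhat N ω)))
      atTop (𝓝 0) :=
  stmt6_general P Θ hΘ g hcont D hD lam hlamnn θhat hθhatmem hθhatmin θ₀ hθ₀ hmean h hh hhcont hsup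
    C₀ hC₀ hCbar0 hCbarhat hlam
end
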